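/- Let r > 0, 0 ≤ λ ≤ r, let X be a random variable with density f_{r,λ} (i.e. X ~ χ²_r(λ)), and let A ⊆ ℝ be a Borel set. Then | 𝔼[(X − (r+λ)) · 1_{X ∈ A}] | ≤ 6^{1/2} r^{1/2} ( ℙ(X ∈ Aᶜ) )^{1/2}. -/

import Mathlib

open Real MeasureTheory Set Filter

/-- The noncentral chi-square density with `r` degrees of freedom and
noncentrality parameter `lam` (set to `0` for `x ≤ 0`). -/
noncomputable def chiSqPDF (r lam x : ℝ) : ℝ :=
  if 0 < x then
    (x / 2) ^ (r / 2 - 1) / (2 * Real.exp ((x + lam) / 2)) *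
      ∑' j : ℕ, (lam * x / 4) ^ j / ((j.factorial : ℝ) * Real.Gamma (r / 2 + (j : ℝ)))
  else 0

/-- `δ_x = (x − (r+λ)) / √(2(r+2λ))`. -/
noncomputable def stdDelta (r lam x : ℝ) : ℝ :=
  (x - (r + lam)) / Real.sqrt (2 * (r + 2 * lam))

/-- The standard normal density. -/
noncomputable def stdPhi (z : ℝ) : ℝ :=
  Real.exp (-z ^ 2 / 2) / Real.sqrt (2 * Real.pi)

/-- The standard normal survival function. -/
noncomputable def stdPsi (z : ℝ) : ℝ := ∫ y in Set.Ioi z, stdPhi y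

/-- The survival function of the noncentral chi-square distribution. -/
noncomputable def chiSqSurv (r lam a : ℝ) : ℝ := ∫ x in Set.Ioi a, chiSqPDF r lam x

/-- `D_{r,λ} = (r+λ)/√(2(r+2λ))`. -/
noncomputable def Drl (r lam : ℝ) : ℝ := (r + lam) / Real.sqrt (2 * (r + 2 * lam))

/-- The bulk `B_{r,λ}(η)` of the noncentral chi-square distribution. -/
noncomputable def bulk (r lam eta : ℝ) : Set ℝ :=
  {x : ℝ | 0 < x ∧ |stdDelta r lam x / Drl r lam| ≤ eta * r ^ (-(1:ℝ)/3)}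

/-!
χ²_r(λ) is the Poisson(λ/2) mixture of the Gamma(r/2 + j, 1/2) laws, so its moments are
Poisson averages of Gamma moments; the factorial moments of the Poisson weights give mean
r + λ and variance 2(r + 2λ) ≤ 6r. As X − (r + λ) is centred, its integral over A is minus
its integral over Aᶜ, and Cauchy–Schwarz on Aᶜ against the density gives the bound.
-/

open ProbabilityTheory
open scoped Nat

theorem abs_integral_mul_le_sqrt_mul_sqrt {α : Type*} [MeasurableSpace α] {μ : Measure α}
    {g w : α → ℝ} (hg : AEStronglyMeasurable g μ) (hw : 0 ≤ᵐ[μ] w) (hw_int : Integrable w μ)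
    (hgw_int : Integrable (fun x ↦ g x ^ 2 * w x) μ) :
    |∫ x, g x * w x ∂μ| ≤ √(∫ x, g x ^ 2 * w x ∂μ) * √(∫ x, w x ∂μ) := by
  set u : α → ℝ := fun x ↦ |g x| * √(w x)
  set v : α → ℝ := fun x ↦ √(w x)
  have hu_sq : (fun x ↦ u x ^ 2) =ᵐ[μ] fun x ↦ g x ^ 2 * w x := by
    filter_upwards [hw] with x hx
    rw [mul_pow, sq_abs, sq_sqrt hx]
  have hv_sq : (fun x ↦ v x ^ 2) =ᵐ[μ] w := by
    filter_upwards [hw] with x hx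
    exact sq_sqrt hx
  have hv_meas : AEStronglyMeasurable v μ := hw_int.1.aemeasurable.sqrt.aestronglyMeasurable
  have hu_meas : AEStronglyMeasurable u μ := hg.norm.mul hv_meas
  have hu : MemLp u (ENNReal.ofReal 2) μ := by
    rw [ENNReal.ofReal_ofNat, memLp_two_iff_integrable_sq hu_meas]
    exact hgw_int.congr hu_sq.symm
  have hv : MemLp v (ENNReal.ofReal 2) μ := by
    rw [ENNReal.ofReal_ofNat, memLp_two_iff_integrable_sq hv_meas]
    exact hw_int.congr hv_sq.symm
  have holder := integral_mul_le_Lp_mul_Lq_of_nonneg Real.HolderConjugate.two_two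
    (.of_forall fun x ↦ by positivity) (.of_forall fun x ↦ by positivity) hu hv
  simp only [rpow_two, integral_congr_ae hu_sq, integral_congr_ae hv_sq, ← sqrt_eq_rpow] at holder
  calc |∫ x, g x * w x ∂μ| ≤ ∫ x, |g x * w x| ∂μ := abs_integral_le_integral_abs
    _ = ∫ x, u x * v x ∂μ := integral_congr_ae <| by
        filter_upwards [hw] with x hx
        rw [abs_mul, abs_of_nonneg hx, mul_assoc, mul_self_sqrt hx]
    _ ≤ _ := holder

noncomputable def poissonWeight (t : ℝ) (n : ℕ) : ℝ := exp (-t) * t ^ n / n !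

lemma poissonWeight_nonneg {t : ℝ} (ht : 0 ≤ t) (n : ℕ) : 0 ≤ poissonWeight t n := by
  unfold poissonWeight; positivity

lemma hasSum_descFactorial_mul_poissonWeight (t : ℝ) (k : ℕ) :
    HasSum (fun n ↦ (n.descFactorial k : ℝ) * poissonWeight t n) (t ^ k) := by
  have hsum : HasSum (poissonWeight t) 1 := by
    have h := (NormedSpace.expSeries_div_hasSum_exp t).mul_left (exp (-t))
    rw [← congrFun exp_eq_exp_ℝ, ← exp_add, neg_add_cancel, exp_zero] at h
    unfold poissonWeight
    simpa only [mul_div_assoc] using h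
  have hshift (n : ℕ) : ((n + k).descFactorial k : ℝ) * poissonWeight t (n + k)
      = t ^ k * poissonWeight t n := by
    have h := Nat.factorial_mul_descFactorial (Nat.le_add_left k n)
    rw [Nat.add_sub_cancel] at h
    rw [poissonWeight, poissonWeight, ← h]
    push_cast
    field_simp
    ring
  have hlow : ∑ n ∈ Finset.range k, (n.descFactorial k : ℝ) * poissonWeight t n = 0 :=
    Finset.sum_eq_zero fun n hn ↦ by
      rw [Nat.descFactorial_eq_zero_iff_lt.mpr (Finset.mem_range.mp hn), Nat.cast_zero, zero_mul]
  rw [← hasSum_nat_add_iff' k, hlow, sub_zero]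
  simpa [hshift] using hsum.mul_left (t ^ k)

section Gamma

variable {a b : ℝ}

lemma integral_pow_mul_gammaPDFReal (ha : 0 < a) (hb : 0 < b) (k : ℕ) :
    ∫ x, x ^ k * gammaPDFReal a b x = Gamma (a + k) / (Gamma a * b ^ k) := by
  have hvanish : ∀ x ∉ Ici (0 : ℝ), x ^ k * gammaPDFReal a b x = 0 := fun x hx ↦ by
    rw [gammaPDFReal, if_neg (by simpa using hx), mul_zero]
  calc ∫ x, x ^ k * gammaPDFReal a b x
      = ∫ x in Ioi 0, b ^ a / Gamma a * (x ^ (a + k - 1) * exp (-(b * x))) := by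
        rw [← setIntegral_eq_integral_of_forall_compl_eq_zero hvanish,
          integral_Ici_eq_integral_Ioi]
        refine setIntegral_congr_fun measurableSet_Ioi fun x (hx : 0 < x) ↦ ?_
        rw [gammaPDFReal, if_pos hx.le, add_sub_right_comm, rpow_add hx, rpow_natCast]
        ring
    _ = b ^ a / Gamma a * ((1 / b) ^ (a + k) * Gamma (a + k)) := by
        rw [integral_const_mul, integral_rpow_mul_exp_neg_mul_Ioi (by positivity) hb]
    _ = Gamma (a + k) / (Gamma a * b ^ k) := by
        rw [one_div, inv_rpow hb.le, rpow_add hb, rpow_natCast]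
        have : b ^ a ≠ 0 := (rpow_pos_of_pos hb a).ne'
        field_simp

lemma integrable_pow_mul_gammaPDFReal (ha : 0 < a) (hb : 0 < b) (k : ℕ) :
    Integrable fun x ↦ x ^ k * gammaPDFReal a b x :=
  .of_integral_ne_zero <| by rw [integral_pow_mul_gammaPDFReal ha hb]; positivity

lemma pow_mul_gammaPDFReal_nonneg (ha : 0 < a) (hb : 0 < b) (k : ℕ) (x : ℝ) :
    0 ≤ x ^ k * gammaPDFReal a b x := by
  rcases le_or_gt 0 x with hx | hx
  · exact mul_nonneg (pow_nonneg hx k) (gammaPDFReal_nonneg ha hb x)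
  · rw [gammaPDFReal, if_neg hx.not_ge, mul_zero]

end Gamma

section ChiSq

variable {r lam : ℝ}

lemma chiSqPDF_eq_tsum_poissonWeight_mul_gammaPDFReal {x : ℝ} (hx : 0 < x) :
    chiSqPDF r lam x
      = ∑' j : ℕ, poissonWeight (lam / 2) j * gammaPDFReal (r / 2 + j) (1 / 2) x := by
  rw [chiSqPDF, if_pos hx, ← tsum_mul_left]
  refine tsum_congr fun j ↦ ?_
  rw [poissonWeight, gammaPDFReal, if_pos hx.le, div_rpow hx.le zero_le_two,
    rpow_sub_one two_ne_zero, add_sub_right_comm, rpow_add hx, rpow_natCast, one_div,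
    inv_rpow zero_le_two, rpow_add two_pos, rpow_natCast, add_div, exp_add, exp_neg, exp_neg,
    div_pow, div_pow, mul_pow, inv_mul_eq_div,
    show (4 : ℝ) ^ j = 2 ^ j * 2 ^ j by rw [← mul_pow]; norm_num]
  field_simp

lemma chiSqPDF_ae_eq_tsum :
    chiSqPDF r lam =ᵐ[volume]
      fun x ↦ ∑' j : ℕ, poissonWeight (lam / 2) j * gammaPDFReal (r / 2 + j) (1 / 2) x := by
  filter_upwards [volume.ae_ne 0] with x hx
  rcases hx.lt_or_gt with hx | hx
  · simp [chiSqPDF, gammaPDFReal, hx.not_gt, hx.not_ge]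
  · exact chiSqPDF_eq_tsum_poissonWeight_mul_gammaPDFReal hx

lemma chiSqPDF_nonneg (hr : 0 < r) (hlam : 0 ≤ lam) (x : ℝ) : 0 ≤ chiSqPDF r lam x := by
  rcases le_or_gt x 0 with hx | hx
  · rw [chiSqPDF, if_neg hx.not_gt]
  · rw [chiSqPDF_eq_tsum_poissonWeight_mul_gammaPDFReal hx]
    exact tsum_nonneg fun j ↦ mul_nonneg (poissonWeight_nonneg (by positivity) j)
      (gammaPDFReal_nonneg (by positivity) one_half_pos x)

lemma integral_pow_mul_chiSqPDF {S : ℝ} (hr : 0 < r) (hlam : 0 ≤ lam) (k : ℕ)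
    (hS : HasSum (fun j : ℕ ↦ poissonWeight (lam / 2) j *
      (Gamma (r / 2 + j + k) / (Gamma (r / 2 + j) * (1 / 2) ^ k))) S) :
    ∫ x, x ^ k * chiSqPDF r lam x = S := by
  set F : ℕ → ℝ → ℝ := fun j x ↦
    poissonWeight (lam / 2) j * (x ^ k * gammaPDFReal (r / 2 + j) (1 / 2) x)
  have hF_int (j : ℕ) : Integrable (F j) :=
    (integrable_pow_mul_gammaPDFReal (by positivity) one_half_pos k).const_mul _
  have hF_integral (j : ℕ) : ∫ x, F j x = poissonWeight (lam / 2) j *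
      (Gamma (r / 2 + j + k) / (Gamma (r / 2 + j) * (1 / 2) ^ k)) := by
    rw [integral_const_mul, integral_pow_mul_gammaPDFReal (by positivity) one_half_pos]
  have hF_norm (j : ℕ) : ∫ x, ‖F j x‖ = ∫ x, F j x := integral_congr_ae <| .of_forall fun x ↦
    Real.norm_of_nonneg <| mul_nonneg (poissonWeight_nonneg (by positivity) j)
      (pow_mul_gammaPDFReal_nonneg (by positivity) one_half_pos k x)
  have hF_sum : Summable fun j ↦ ∫ x, ‖F j x‖ := by
    simpa only [hF_norm, hF_integral] using hS.summable
  calc ∫ x, x ^ k * chiSqPDF r lam x = ∫ x, ∑' j, F j x := by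
        refine integral_congr_ae ?_
        filter_upwards [chiSqPDF_ae_eq_tsum] with x hx
        rw [hx, ← tsum_mul_left]
        exact tsum_congr fun j ↦ by ring
    _ = S := by
        rw [← integral_tsum_of_summable_integral_norm hF_int hF_sum]
        simpa only [hF_integral] using hS.tsum_eq

lemma integral_chiSqPDF (hr : 0 < r) (hlam : 0 ≤ lam) : ∫ x, chiSqPDF r lam x = 1 := by
  have h := hasSum_descFactorial_mul_poissonWeight (lam / 2) 0
  rw [pow_zero] at h
  simpa using integral_pow_mul_chiSqPDF hr hlam 0 <| h.congr_fun fun j ↦ by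
    have : Gamma (r / 2 + j) ≠ 0 := (Gamma_pos_of_pos (by positivity)).ne'
    simp [this]

lemma integral_mul_chiSqPDF (hr : 0 < r) (hlam : 0 ≤ lam) :
    ∫ x, x * chiSqPDF r lam x = r + lam := by
  have h := ((hasSum_descFactorial_mul_poissonWeight (lam / 2) 0).mul_left r).add
    ((hasSum_descFactorial_mul_poissonWeight (lam / 2) 1).mul_left 2)
  rw [show r * (lam / 2) ^ 0 + 2 * (lam / 2) ^ 1 = r + lam by ring] at h
  simpa using integral_pow_mul_chiSqPDF hr hlam 1 <| h.congr_fun fun j ↦ by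
    have ha : 0 < r / 2 + j := by positivity
    rw [Nat.cast_one, Gamma_add_one ha.ne', Nat.descFactorial_one, Nat.descFactorial_zero]
    field_simp [(Gamma_pos_of_pos ha).ne']
    push_cast
    ring

lemma integral_sq_mul_chiSqPDF (hr : 0 < r) (hlam : 0 ≤ lam) :
    ∫ x, x ^ 2 * chiSqPDF r lam x = (r + lam) ^ 2 + 2 * (r + 2 * lam) := by
  have h := (((hasSum_descFactorial_mul_poissonWeight (lam / 2) 0).mul_left (r * (r + 2))).add
    ((hasSum_descFactorial_mul_poissonWeight (lam / 2) 1).mul_left (4 * r + 8))).add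
    ((hasSum_descFactorial_mul_poissonWeight (lam / 2) 2).mul_left 4)
  rw [show r * (r + 2) * (lam / 2) ^ 0 + (4 * r + 8) * (lam / 2) ^ 1 + 4 * (lam / 2) ^ 2
    = (r + lam) ^ 2 + 2 * (r + 2 * lam) by ring] at h
  refine integral_pow_mul_chiSqPDF hr hlam 2 <| h.congr_fun fun j ↦ ?_
  have ha : 0 < r / 2 + j := by positivity
  rw [Nat.cast_two, show r / 2 + j + 2 = r / 2 + j + 1 + 1 by ring,
    Gamma_add_one (by positivity), Gamma_add_one ha.ne', Nat.cast_descFactorial_two,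
    Nat.descFactorial_one, Nat.descFactorial_zero]
  field_simp [(Gamma_pos_of_pos ha).ne']
  push_cast
  ring

lemma integrable_chiSqPDF (hr : 0 < r) (hlam : 0 ≤ lam) : Integrable (chiSqPDF r lam) :=
  integrable_of_integral_eq_one (integral_chiSqPDF hr hlam)

lemma integrable_mul_chiSqPDF (hr : 0 < r) (hlam : 0 ≤ lam) :
    Integrable fun x ↦ x * chiSqPDF r lam x :=
  .of_integral_ne_zero <| by rw [integral_mul_chiSqPDF hr hlam]; positivity

lemma integrable_sq_mul_chiSqPDF (hr : 0 < r) (hlam : 0 ≤ lam) :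
    Integrable fun x ↦ x ^ 2 * chiSqPDF r lam x :=
  .of_integral_ne_zero <| by rw [integral_sq_mul_chiSqPDF hr hlam]; positivity

lemma integrable_sub_mul_chiSqPDF (hr : 0 < r) (hlam : 0 ≤ lam) (c : ℝ) :
    Integrable fun x ↦ (x - c) * chiSqPDF r lam x := by
  simp_rw [sub_mul]
  exact (integrable_mul_chiSqPDF hr hlam).sub ((integrable_chiSqPDF hr hlam).const_mul c)

lemma integral_sub_mul_chiSqPDF (hr : 0 < r) (hlam : 0 ≤ lam) :
    ∫ x, (x - (r + lam)) * chiSqPDF r lam x = 0 := by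
  simp_rw [sub_mul]
  rw [integral_sub (integrable_mul_chiSqPDF hr hlam) ((integrable_chiSqPDF hr hlam).const_mul _),
    integral_const_mul, integral_mul_chiSqPDF hr hlam, integral_chiSqPDF hr hlam, mul_one,
    sub_self]

private lemma sub_sq_mul_eq (x c y : ℝ) :
    (x - c) ^ 2 * y = x ^ 2 * y - 2 * c * (x * y) + c ^ 2 * y := by ring

lemma integrable_sub_sq_mul_chiSqPDF (hr : 0 < r) (hlam : 0 ≤ lam) (c : ℝ) :
    Integrable fun x ↦ (x - c) ^ 2 * chiSqPDF r lam x := by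
  simp_rw [sub_sq_mul_eq]
  exact ((integrable_sq_mul_chiSqPDF hr hlam).sub
    ((integrable_mul_chiSqPDF hr hlam).const_mul _)).add ((integrable_chiSqPDF hr hlam).const_mul _)

lemma integral_sub_sq_mul_chiSqPDF (hr : 0 < r) (hlam : 0 ≤ lam) :
    ∫ x, (x - (r + lam)) ^ 2 * chiSqPDF r lam x = 2 * (r + 2 * lam) := by
  have h0 := integrable_chiSqPDF hr hlam
  have h1 := integrable_mul_chiSqPDF hr hlam
  have h2 := integrable_sq_mul_chiSqPDF hr hlam
  have h21 : Integrable fun x ↦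
      x ^ 2 * chiSqPDF r lam x - 2 * (r + lam) * (x * chiSqPDF r lam x) :=
    h2.sub (h1.const_mul _)
  simp_rw [sub_sq_mul_eq]
  rw [integral_add h21 (h0.const_mul _), integral_sub h2 (h1.const_mul _), integral_const_mul,
    integral_const_mul, integral_sq_mul_chiSqPDF hr hlam, integral_mul_chiSqPDF hr hlam,
    integral_chiSqPDF hr hlam]
  ring

end ChiSq

/-- First central moment of the noncentral chi-square distribution restricted to a
Borel set. -/
theorem chiSq_firstCentralMoment_on_event (r lam : ℝ) (hr : 0 < r) (hlam : 0 ≤ lam)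
    (hlr : lam ≤ r) (A : Set ℝ) (hA : MeasurableSet A) :
    |∫ x in A, (x - (r + lam)) * chiSqPDF r lam x|
      ≤ Real.sqrt 6 * Real.sqrt r * Real.sqrt (∫ x in Aᶜ, chiSqPDF r lam x) := by
  have hcompl : ∫ x in A, (x - (r + lam)) * chiSqPDF r lam x
      = -∫ x in Aᶜ, (x - (r + lam)) * chiSqPDF r lam x := by
    have := integral_add_compl hA (integrable_sub_mul_chiSqPDF hr hlam (r + lam))
    rw [integral_sub_mul_chiSqPDF hr hlam] at this
    linarith
  have hvar : ∫ x in Aᶜ, (x - (r + lam)) ^ 2 * chiSqPDF r lam x ≤ 6 * r :=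
    calc ∫ x in Aᶜ, (x - (r + lam)) ^ 2 * chiSqPDF r lam x
        ≤ ∫ x, (x - (r + lam)) ^ 2 * chiSqPDF r lam x :=
          setIntegral_le_integral (integrable_sub_sq_mul_chiSqPDF hr hlam _)
            (.of_forall fun x ↦ mul_nonneg (sq_nonneg _) (chiSqPDF_nonneg hr hlam x))
      _ = 2 * (r + 2 * lam) := integral_sub_sq_mul_chiSqPDF hr hlam
      _ ≤ 6 * r := by linarith
  calc |∫ x in A, (x - (r + lam)) * chiSqPDF r lam x|
      = |∫ x in Aᶜ, (x - (r + lam)) * chiSqPDF r lam x| := by rw [hcompl, abs_neg]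
    _ ≤ √(∫ x in Aᶜ, (x - (r + lam)) ^ 2 * chiSqPDF r lam x) * √(∫ x in Aᶜ, chiSqPDF r lam x) :=
        abs_integral_mul_le_sqrt_mul_sqrt (by fun_prop) (.of_forall (chiSqPDF_nonneg hr hlam))
          (integrable_chiSqPDF hr hlam).integrableOn
          (integrable_sub_sq_mul_chiSqPDF hr hlam _).integrableOn
    _ ≤ √(6 * r) * √(∫ x in Aᶜ, chiSqPDF r lam x) := by gcongr
    _ = √6 * √r * √(∫ x in Aᶜ, chiSqPDF r lam x) := by rw [sqrt_mul (by norm_num)]
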